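/- arXiv:2105.10616 — 7 statements merged into one kernel-verified Lean document; each statement's English description precedes it below -/
import Mathlib

section
/- Let D be a group with subgroups G and G* such that G ∩ G* = {1} and D = G*G = GG*. For ℓ ∈ G*, h ∈ G let ℓ▷h ∈ G and ℓ◁h ∈ G* be the unique elements with ℓh = (ℓ▷h)(ℓ◁h). Suppose ℓᵢ, ℓ̃ᵢ ∈ G* and hᵢ, h̃ᵢ ∈ G satisfy the ribbon relations ℓᵢhᵢ = h̃ᵢℓ̃ᵢ for i = 1, 2, together with the gluing constraint ℓ̃₁ℓ̃₂ = 1. Then h̃₁h₂⁻¹ = ℓ₁▷(h₁h̃₂⁻¹) and ℓ₂⁻¹ = ℓ₁◁(h₁h̃₂⁻¹); that is, the fused variables h₁₂ = h₁h̃₂⁻¹ and h̃₁₂ = h̃₁h₂⁻¹ again satisfy h̃₁₂ = ℓ₁▷h₁₂ and ℓ₁◁h₁₂ = ℓ₂⁻¹. -/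
/-- Gluing two Heisenberg-double ribbons along the constraint `ℓ̃₁ℓ̃₂ = 1`:
the fused variables `h₁₂ = h₁h̃₂⁻¹` and `h̃₁₂ = h̃₁h₂⁻¹` again satisfy
`h̃₁₂ = ℓ₁▷h₁₂` and `ℓ₁◁h₁₂ = ℓ₂⁻¹`, where `ℓ▷h ∈ G` and `ℓ◁h ∈ G*` are the
unique elements with `ℓh = (ℓ▷h)(ℓ◁h)` in the exact factorization
`D = G*G = GG*`. -/
theorem glued_ribbon_is_heisenberg_ribbon
    {D : Type*} [Group D] (G Gs : Subgroup D)
    (hdisj : ∀ x : D, x ∈ G → x ∈ Gs → x = 1)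
    (hfact : ∀ d : D, ∃ ℓ ∈ Gs, ∃ h ∈ G, d = ℓ * h)
    (hfact' : ∀ d : D, ∃ h ∈ G, ∃ ℓ ∈ Gs, d = h * ℓ)
    (tr : ↥Gs → ↥G → ↥G) (tl : ↥Gs → ↥G → ↥Gs)
    (hdef : ∀ (ℓ : ↥Gs) (h : ↥G),
      (ℓ : D) * (h : D) = (tr ℓ h : D) * (tl ℓ h : D))
    (ℓ₁ ℓ₂ ℓt₁ ℓt₂ : ↥Gs) (h₁ h₂ ht₁ ht₂ : ↥G)
    (rib₁ : (ℓ₁ : D) * (h₁ : D) = (ht₁ : D) * (ℓt₁ : D))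
    (rib₂ : (ℓ₂ : D) * (h₂ : D) = (ht₂ : D) * (ℓt₂ : D))
    (glue : ℓt₁ * ℓt₂ = 1) :
    ht₁ * h₂⁻¹ = tr ℓ₁ (h₁ * ht₂⁻¹) ∧ ℓ₂⁻¹ = tl ℓ₁ (h₁ * ht₂⁻¹) := by
  have hℓt : (ℓt₁ : D) = (ℓt₂ : D)⁻¹ := by
    have : (ℓt₁ * ℓt₂ : ↥Gs) = 1 := glue
    have := congrArg (Subgroup.subtype Gs) this
    simp at this
    exact eq_inv_of_mul_eq_one_left this
  have hℓt₂ : (ℓt₂ : D) = (ht₂ : D)⁻¹ * (ℓ₂ : D) * (h₂ : D) := by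
    rw [eq_comm, mul_assoc, rib₂, ← mul_assoc, inv_mul_cancel, one_mul]
  have key : ((ht₁ : D) * (h₂ : D)⁻¹) * (ℓ₂ : D)⁻¹
      = ((tr ℓ₁ (h₁ * ht₂⁻¹) : ↥G) : D) * ((tl ℓ₁ (h₁ * ht₂⁻¹) : ↥Gs) : D) := by
    rw [← hdef]
    have e : (ℓ₁ : D) = (ht₁ : D) * (ℓt₁ : D) * (h₁ : D)⁻¹ :=
      eq_mul_inv_iff_mul_eq.mpr rib₁
    rw [e, hℓt, hℓt₂]
    push_cast
    group
  -- uniqueness of G·Gs factorization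
  have hx : ((ht₁ * h₂⁻¹ : ↥G) : D) * ((ℓ₂⁻¹ : ↥Gs) : D)
      = ((tr ℓ₁ (h₁ * ht₂⁻¹) : ↥G) : D) * ((tl ℓ₁ (h₁ * ht₂⁻¹) : ↥Gs) : D) := by
    push_cast; exact key
  have huniq : (ht₁ * h₂⁻¹ : ↥G) = tr ℓ₁ (h₁ * ht₂⁻¹) ∧
      (ℓ₂⁻¹ : ↥Gs) = tl ℓ₁ (h₁ * ht₂⁻¹) := by
    set a := (ht₁ * h₂⁻¹ : ↥G)
    set b := (ℓ₂⁻¹ : ↥Gs)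
    set c := tr ℓ₁ (h₁ * ht₂⁻¹)
    set d := tl ℓ₁ (h₁ * ht₂⁻¹)
    have hmem : ((c : D)⁻¹ * (a : D)) ∈ G := by
      exact mul_mem (inv_mem c.2) a.2
    have hmem' : ((c : D)⁻¹ * (a : D)) ∈ Gs := by
      have : (c : D)⁻¹ * (a : D) = (d : D) * (b : D)⁻¹ := by
        rw [eq_comm, mul_inv_eq_iff_eq_mul, mul_assoc, hx, ← mul_assoc,
          inv_mul_cancel, one_mul]
      rw [this]
      exact mul_mem d.2 (inv_mem b.2)
    have h1 : (c : D)⁻¹ * (a : D) = 1 := hdisj _ hmem hmem'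
    have hac : (a : D) = (c : D) := by
      rw [eq_comm, ← inv_mul_eq_one]; exact h1
    have hbd : (b : D) = (d : D) := by
      have := hx
      rw [hac] at this
      exact mul_left_cancel this
    exact ⟨Subtype.ext hac, Subtype.ext hbd⟩
  exact huniq
end

section
/- Let g₁ and g₂ be Lie algebras over a commutative ring k, equipped with bilinear maps ▷ : g₂ × g₁ → g₁ and ◁ : g₂ × g₁ → g₂ satisfying, for all f, f' ∈ g₂ and x, x' ∈ g₁: (i) [f,f']▷x = f▷(f'▷x) − f'▷(f▷x); (ii) f◁[x,x'] = (f◁x)◁x' − (f◁x')◁x; (iii) f▷[x,x'] = [f▷x, x'] + [x, f▷x'] + (f◁x)▷x' − (f◁x')▷x; (iv) [f,f']◁x = [f◁x, f'] + [f, f'◁x] + f◁(f'▷x) − f'◁(f▷x). Then the bracket on g₁ ⊕ g₂ defined by [(x,f),(x',f')] = ([x,x'] + f▷x' − f'▷x, [f,f'] + f◁x' − f'◁x) is bilinear, alternating and satisfies the Jacobi identity, so that g₁ ⊕ g₂ is a Lie algebra (the double cross sum g₁ ⋈ g₂). -/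
/-- The bracket of the double cross sum `g₁ ⋈ g₂` of a matched pair of Lie
algebras: `[(x,f),(x',f')] = ([x,x'] + f▷x' − f'▷x, [f,f'] + f◁x' − f'◁x)`. -/
def doubleCrossSumBracket {k : Type*} [CommRing k]
    {g₁ : Type*} [LieRing g₁] [LieAlgebra k g₁]
    {g₂ : Type*} [LieRing g₂] [LieAlgebra k g₂]
    (act : g₂ →ₗ[k] g₁ →ₗ[k] g₁) (back : g₂ →ₗ[k] g₁ →ₗ[k] g₂) :
    g₁ × g₂ → g₁ × g₂ → g₁ × g₂ :=
  fun p q =>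
    (⁅p.1, q.1⁆ + act p.2 q.1 - act q.2 p.1,
     ⁅p.2, q.2⁆ + back p.2 q.1 - back q.2 p.1)

/-- If `(g₁, g₂, ▷, ◁)` is a matched pair of Lie algebras, then the double
cross sum bracket on `g₁ ⊕ g₂` is bilinear, alternating and satisfies the
Jacobi identity, so `g₁ ⋈ g₂` is a Lie algebra. -/
theorem doubleCrossSum_isLieBracket {k : Type*} [CommRing k]
    {g₁ : Type*} [LieRing g₁] [LieAlgebra k g₁]
    {g₂ : Type*} [LieRing g₂] [LieAlgebra k g₂]
    (act : g₂ →ₗ[k] g₁ →ₗ[k] g₁) (back : g₂ →ₗ[k] g₁ →ₗ[k] g₂)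
    (mp₁ : ∀ (f f' : g₂) (x : g₁),
      act ⁅f, f'⁆ x = act f (act f' x) - act f' (act f x))
    (mp₂ : ∀ (f : g₂) (x x' : g₁),
      back f ⁅x, x'⁆ = back (back f x) x' - back (back f x') x)
    (mp₃ : ∀ (f : g₂) (x x' : g₁),
      act f ⁅x, x'⁆ = ⁅act f x, x'⁆ + ⁅x, act f x'⁆
        + act (back f x) x' - act (back f x') x)
    (mp₄ : ∀ (f f' : g₂) (x : g₁),
      back ⁅f, f'⁆ x = ⁅back f x, f'⁆ + ⁅f, back f' x⁆
        + back f (act f' x) - back f' (act f x)) :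
    (∀ (a : k) (p p' q : g₁ × g₂),
      doubleCrossSumBracket act back (a • p + p') q =
        a • doubleCrossSumBracket act back p q
          + doubleCrossSumBracket act back p' q) ∧
    (∀ (a : k) (p q q' : g₁ × g₂),
      doubleCrossSumBracket act back p (a • q + q') =
        a • doubleCrossSumBracket act back p q
          + doubleCrossSumBracket act back p q') ∧
    (∀ p : g₁ × g₂, doubleCrossSumBracket act back p p = 0) ∧
    (∀ p q r : g₁ × g₂,
      doubleCrossSumBracket act back p (doubleCrossSumBracket act back q r)
      + doubleCrossSumBracket act back q (doubleCrossSumBracket act back r p)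
      + doubleCrossSumBracket act back r (doubleCrossSumBracket act back p q)
      = 0) := by

  refine ⟨?_, ?_, ?_, ?_⟩
  · intro a p p' q
    simp only [doubleCrossSumBracket, Prod.smul_mk, Prod.mk_add_mk, Prod.smul_fst,
      Prod.smul_snd, Prod.fst_add, Prod.snd_add, Prod.mk.injEq, map_add, map_smul,
      LinearMap.add_apply, LinearMap.smul_apply, add_lie, smul_lie]
    constructor <;> module
  · intro a p q q'
    simp only [doubleCrossSumBracket, Prod.smul_mk, Prod.mk_add_mk, Prod.smul_fst,
      Prod.smul_snd, Prod.fst_add, Prod.snd_add, Prod.mk.injEq, map_add, map_smul,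
      LinearMap.add_apply, LinearMap.smul_apply, lie_add, lie_smul]
    constructor <;> module
  · intro p
    simp [doubleCrossSumBracket, Prod.ext_iff]
  · intro p q r
    obtain ⟨x, f⟩ := p
    obtain ⟨y, g⟩ := q
    obtain ⟨z, h⟩ := r
    simp only [doubleCrossSumBracket, Prod.mk_add_mk, Prod.mk.injEq, map_add, map_sub,
      LinearMap.add_apply, LinearMap.sub_apply, lie_add, add_lie, lie_sub, sub_lie,
      Prod.mk_eq_zero, mp₁, mp₂, mp₃, mp₄]
    constructor
    · linear_combination (norm := module) lie_jacobi x y z - lie_skew x ((act g) z)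
        - lie_skew y ((act h) x) - lie_skew z ((act f) y)
    · linear_combination (norm := module) lie_jacobi f g h + lie_skew f ((back h) y)
        + lie_skew g ((back f) z) + lie_skew h ((back g) x)
end

section
/- Let (g₁, g₂, ▷, ◁) be a matched pair of Lie algebras over a field k, g = g₁ ⋈ g₂ the double cross sum, and d = g ⊕ g* the Lie algebra with bracket [(X,α),(Y,β)] = ([X,Y], ad*_X β − ad*_Y α), where (ad*_X α)(Z) = −α([X,Z]). Let g₁* ⊆ g* denote the annihilator of g₂ (functionals vanishing on {0} ⊕ g₂) and g₂* ⊆ g* the annihilator of g₁. Then b₁ := ({0} ⊕ g₂) ⊕ g₁* and b₂ := (g₁ ⊕ {0}) ⊕ g₂* are Lie subalgebras of d, in b₁ the subspace g₁* is an abelian ideal, in b₂ the subspace g₂* is an abelian ideal, and d = b₁ ⊕ b₂ as vector spaces. -/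
section

variable {k : Type*} [Field k]
variable {g₁ : Type*} [LieRing g₁] [LieAlgebra k g₁]
variable {g₂ : Type*} [LieRing g₂] [LieAlgebra k g₂]

/-- The bracket of the double cross sum `g = g₁ ⋈ g₂` of a matched pair. -/
def dcsBracket (act : g₂ →ₗ[k] g₁ →ₗ[k] g₁) (back : g₂ →ₗ[k] g₁ →ₗ[k] g₂) :
    g₁ × g₂ → g₁ × g₂ → g₁ × g₂ :=
  fun p q =>
    (⁅p.1, q.1⁆ + act p.2 q.1 - act q.2 p.1,
     ⁅p.2, q.2⁆ + back p.2 q.1 - back q.2 p.1)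

lemma dcsBracket_add_right (act : g₂ →ₗ[k] g₁ →ₗ[k] g₁)
    (back : g₂ →ₗ[k] g₁ →ₗ[k] g₂) (X Z Z' : g₁ × g₂) :
    dcsBracket act back X (Z + Z') =
      dcsBracket act back X Z + dcsBracket act back X Z' := by
  simp only [dcsBracket, Prod.fst_add, Prod.snd_add, lie_add, map_add,
    LinearMap.add_apply, Prod.mk_add_mk, Prod.mk.injEq]
  constructor <;> abel

lemma dcsBracket_smul_right (act : g₂ →ₗ[k] g₁ →ₗ[k] g₁)
    (back : g₂ →ₗ[k] g₁ →ₗ[k] g₂) (c : k) (X Z : g₁ × g₂) :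
    dcsBracket act back X (c • Z) = c • dcsBracket act back X Z := by
  simp only [dcsBracket, Prod.smul_fst, Prod.smul_snd, lie_smul, map_smul,
    LinearMap.smul_apply, Prod.smul_mk, smul_add, smul_sub]

/-- The coadjoint action `(ad*_X α)(Z) = −α([X,Z])` of `g = g₁ ⋈ g₂` on its
dual space. -/
def dcsCoad (act : g₂ →ₗ[k] g₁ →ₗ[k] g₁) (back : g₂ →ₗ[k] g₁ →ₗ[k] g₂)
    (X : g₁ × g₂) (α : Module.Dual k (g₁ × g₂)) : Module.Dual k (g₁ × g₂) where
  toFun Z := -α (dcsBracket act back X Z)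
  map_add' Z Z' := by
    try dsimp only
    rw [dcsBracket_add_right, map_add]; abel
  map_smul' c Z := by
    try dsimp only
    rw [dcsBracket_smul_right, map_smul]; simp

/-- The bracket `[(X,α),(Y,β)] = ([X,Y], ad*_X β − ad*_Y α)` on
`d = (g₁ ⋈ g₂) ⋉ g*`. -/
def dBracket (act : g₂ →ₗ[k] g₁ →ₗ[k] g₁) (back : g₂ →ₗ[k] g₁ →ₗ[k] g₂) :
    (g₁ × g₂) × Module.Dual k (g₁ × g₂) →
    (g₁ × g₂) × Module.Dual k (g₁ × g₂) →
    (g₁ × g₂) × Module.Dual k (g₁ × g₂) :=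
  fun P Q =>
    (dcsBracket act back P.1 Q.1,
     dcsCoad act back P.1 Q.2 - dcsCoad act back Q.1 P.2)

/-- `b₁ = ({0} ⊕ g₂) ⊕ g₁*`, where `g₁* ⊆ g*` is the annihilator of `g₂`. -/
def bOne (k : Type*) [Field k] (g₁ g₂ : Type*)
    [LieRing g₁] [LieAlgebra k g₁] [LieRing g₂] [LieAlgebra k g₂] :
    Set ((g₁ × g₂) × Module.Dual k (g₁ × g₂)) :=
  {P | P.1.1 = 0 ∧ ∀ f : g₂, P.2 (0, f) = 0}

/-- `b₂ = (g₁ ⊕ {0}) ⊕ g₂*`, where `g₂* ⊆ g*` is the annihilator of `g₁`. -/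
def bTwo (k : Type*) [Field k] (g₁ g₂ : Type*)
    [LieRing g₁] [LieAlgebra k g₁] [LieRing g₂] [LieAlgebra k g₂] :
    Set ((g₁ × g₂) × Module.Dual k (g₁ × g₂)) :=
  {P | P.1.2 = 0 ∧ ∀ x : g₁, P.2 (x, 0) = 0}

/-!
The terms of the double cross bracket involving `▷` and `◁` vanish when both arguments lie in
`g₁ ⊕ 0`, or both in `0 ⊕ g₂`, so each of these is a subalgebra of `g`. Consequently `ad*` of an
element of `0 ⊕ g₂` preserves the annihilator `g₁*` of `0 ⊕ g₂`, which gives both the closure of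
`b₁` and the ideal property of `g₁*` in it (symmetrically for `b₂`), while `g*` is abelian in `d`.
Restricting a functional to the two factors splits `g* = g₁* ⊕ g₂*`.
-/

section

variable (act : g₂ →ₗ[k] g₁ →ₗ[k] g₁) (back : g₂ →ₗ[k] g₁ →ₗ[k] g₂)

@[simp]
lemma dcsBracket_zero_left (Z : g₁ × g₂) : dcsBracket act back 0 Z = 0 := by
  simp [dcsBracket]

@[simp]
lemma dcsBracket_zero_right (X : g₁ × g₂) : dcsBracket act back X 0 = 0 := by
  simp [dcsBracket]

lemma dcsBracket_inl_inl (x x' : g₁) :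
    dcsBracket act back (x, 0) (x', 0) = (⁅x, x'⁆, 0) := by
  simp [dcsBracket]

lemma dcsBracket_inr_inr (f f' : g₂) :
    dcsBracket act back (0, f) (0, f') = (0, ⁅f, f'⁆) := by
  simp [dcsBracket]

@[simp]
lemma dcsCoad_apply (X : g₁ × g₂) (α : Module.Dual k (g₁ × g₂)) (Z : g₁ × g₂) :
    dcsCoad act back X α Z = -α (dcsBracket act back X Z) :=
  rfl

lemma dBracket_dual_dual (α β : Module.Dual k (g₁ × g₂)) :
    dBracket act back ((0 : g₁ × g₂), α) ((0 : g₁ × g₂), β) = 0 := by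
  ext <;> simp [dBracket]

lemma dBracket_dual_fst (P : (g₁ × g₂) × Module.Dual k (g₁ × g₂))
    (α : Module.Dual k (g₁ × g₂)) :
    (dBracket act back P ((0 : g₁ × g₂), α)).1 = 0 :=
  dcsBracket_zero_right act back P.1

lemma dBracket_mem_bOne {P Q : (g₁ × g₂) × Module.Dual k (g₁ × g₂)}
    (hP : P ∈ bOne k g₁ g₂) (hQ : Q ∈ bOne k g₁ g₂) :
    dBracket act back P Q ∈ bOne k g₁ g₂ := by
  obtain ⟨⟨x, f⟩, α⟩ := P
  obtain ⟨⟨x', f'⟩, β⟩ := Q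
  obtain ⟨rfl : x = 0, hα⟩ := hP
  obtain ⟨rfl : x' = 0, hβ⟩ := hQ
  refine ⟨by simp [dBracket, dcsBracket_inr_inr], fun h => ?_⟩
  simp [dBracket, dcsBracket_inr_inr, hα, hβ]

lemma dBracket_mem_bTwo {P Q : (g₁ × g₂) × Module.Dual k (g₁ × g₂)}
    (hP : P ∈ bTwo k g₁ g₂) (hQ : Q ∈ bTwo k g₁ g₂) :
    dBracket act back P Q ∈ bTwo k g₁ g₂ := by
  obtain ⟨⟨x, f⟩, α⟩ := P
  obtain ⟨⟨x', f'⟩, β⟩ := Q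
  obtain ⟨rfl : f = 0, hα⟩ := hP
  obtain ⟨rfl : f' = 0, hβ⟩ := hQ
  refine ⟨by simp [dBracket, dcsBracket_inl_inl], fun z => ?_⟩
  simp [dBracket, dcsBracket_inl_inl, hα, hβ]

end

lemma exists_bOne_add_bTwo (P : (g₁ × g₂) × Module.Dual k (g₁ × g₂)) :
    ∃ Q R, Q ∈ bOne k g₁ g₂ ∧ R ∈ bTwo k g₁ g₂ ∧ P = Q + R := by
  obtain ⟨⟨x, f⟩, α⟩ := P
  refine ⟨((0, f), α ∘ₗ LinearMap.inl k g₁ g₂ ∘ₗ LinearMap.fst k g₁ g₂),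
    ((x, 0), α ∘ₗ LinearMap.inr k g₁ g₂ ∘ₗ LinearMap.snd k g₁ g₂),
    ⟨rfl, by simp [Prod.mk_zero_zero]⟩, ⟨rfl, by simp [Prod.mk_zero_zero]⟩, ?_⟩
  ext : 1
  · simp
  · ext <;> simp [Prod.mk_zero_zero]

lemma bOne_add_bTwo_eq_zero {Q R : (g₁ × g₂) × Module.Dual k (g₁ × g₂)}
    (hQ : Q ∈ bOne k g₁ g₂) (hR : R ∈ bTwo k g₁ g₂) (h : Q + R = 0) :
    Q = 0 ∧ R = 0 := by
  obtain ⟨⟨x, f⟩, α⟩ := Q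
  obtain ⟨⟨x', f'⟩, β⟩ := R
  obtain ⟨rfl : x = 0, hα⟩ := hQ
  obtain ⟨rfl : f' = 0, hβ⟩ := hR
  simp only [Prod.mk_add_mk, Prod.mk_eq_zero, zero_add, add_zero] at h
  obtain ⟨⟨rfl, rfl⟩, hαβ⟩ := h
  obtain rfl : β = -α := eq_neg_of_add_eq_zero_right hαβ
  have hα₀ : α = 0 :=
    LinearMap.prod_ext (LinearMap.ext fun z => by simpa using hβ z) (LinearMap.ext hα)
  simp [hα₀]

theorem semidualization_skeletal_slicing_general
    (act : g₂ →ₗ[k] g₁ →ₗ[k] g₁) (back : g₂ →ₗ[k] g₁ →ₗ[k] g₂) :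
    -- `b₁` is a Lie subalgebra of `d`
    (∀ P Q, P ∈ bOne k g₁ g₂ → Q ∈ bOne k g₁ g₂ →
      dBracket act back P Q ∈ bOne k g₁ g₂) ∧
    -- `b₂` is a Lie subalgebra of `d`
    (∀ P Q, P ∈ bTwo k g₁ g₂ → Q ∈ bTwo k g₁ g₂ →
      dBracket act back P Q ∈ bTwo k g₁ g₂) ∧
    -- in `b₁`, the subspace `g₁*` is an abelian ideal
    (∀ α β : Module.Dual k (g₁ × g₂),
      (∀ f : g₂, α (0, f) = 0) → (∀ f : g₂, β (0, f) = 0) →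
      dBracket act back ((0 : g₁ × g₂), α) ((0 : g₁ × g₂), β) = 0) ∧
    (∀ P (α : Module.Dual k (g₁ × g₂)), P ∈ bOne k g₁ g₂ →
      (∀ f : g₂, α (0, f) = 0) →
      (dBracket act back P ((0 : g₁ × g₂), α)).1 = 0 ∧
      ∀ f : g₂, (dBracket act back P ((0 : g₁ × g₂), α)).2 (0, f) = 0) ∧
    -- in `b₂`, the subspace `g₂*` is an abelian ideal
    (∀ α β : Module.Dual k (g₁ × g₂),
      (∀ x : g₁, α (x, 0) = 0) → (∀ x : g₁, β (x, 0) = 0) →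
      dBracket act back ((0 : g₁ × g₂), α) ((0 : g₁ × g₂), β) = 0) ∧
    (∀ P (α : Module.Dual k (g₁ × g₂)), P ∈ bTwo k g₁ g₂ →
      (∀ x : g₁, α (x, 0) = 0) →
      (dBracket act back P ((0 : g₁ × g₂), α)).1 = 0 ∧
      ∀ x : g₁, (dBracket act back P ((0 : g₁ × g₂), α)).2 (x, 0) = 0) ∧
    -- `d = b₁ ⊕ b₂` as vector spaces
    (∀ P : (g₁ × g₂) × Module.Dual k (g₁ × g₂),
      ∃ Q R, Q ∈ bOne k g₁ g₂ ∧ R ∈ bTwo k g₁ g₂ ∧ P = Q + R) ∧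
    (∀ Q R, Q ∈ bOne k g₁ g₂ → R ∈ bTwo k g₁ g₂ → Q + R = 0 →
      Q = 0 ∧ R = 0) := by
  refine ⟨fun _ _ => dBracket_mem_bOne act back, fun _ _ => dBracket_mem_bTwo act back,
    fun α β _ _ => dBracket_dual_dual act back α β, fun P α hP hα => ?_,
    fun α β _ _ => dBracket_dual_dual act back α β, fun P α hP hα => ?_,
    exists_bOne_add_bTwo, fun _ _ => bOne_add_bTwo_eq_zero⟩
  · exact ⟨dBracket_dual_fst act back P α, (dBracket_mem_bOne act back hP ⟨rfl, hα⟩).2⟩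
  · exact ⟨dBracket_dual_fst act back P α, (dBracket_mem_bTwo act back hP ⟨rfl, hα⟩).2⟩

/-- Semidualization of the classical double `d = (g₁ ⋈ g₂) ⋉ g*` of a matched
pair: `b₁ = ({0} ⊕ g₂) ⊕ g₁*` and `b₂ = (g₁ ⊕ {0}) ⊕ g₂*` are Lie subalgebras
of `d`; in `b₁` the subspace `g₁*` is an abelian ideal, in `b₂` the subspace
`g₂*` is an abelian ideal, and `d = b₁ ⊕ b₂` as vector spaces. -/
theorem semidualization_skeletal_slicing
    (act : g₂ →ₗ[k] g₁ →ₗ[k] g₁) (back : g₂ →ₗ[k] g₁ →ₗ[k] g₂)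
    (mp₁ : ∀ (f f' : g₂) (x : g₁),
      act ⁅f, f'⁆ x = act f (act f' x) - act f' (act f x))
    (mp₂ : ∀ (f : g₂) (x x' : g₁),
      back f ⁅x, x'⁆ = back (back f x) x' - back (back f x') x)
    (mp₃ : ∀ (f : g₂) (x x' : g₁),
      act f ⁅x, x'⁆ = ⁅act f x, x'⁆ + ⁅x, act f x'⁆
        + act (back f x) x' - act (back f x') x)
    (mp₄ : ∀ (f f' : g₂) (x : g₁),
      back ⁅f, f'⁆ x = ⁅back f x, f'⁆ + ⁅f, back f' x⁆
        + back f (act f' x) - back f' (act f x)) :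
    -- `b₁` is a Lie subalgebra of `d`
    (∀ P Q, P ∈ bOne k g₁ g₂ → Q ∈ bOne k g₁ g₂ →
      dBracket act back P Q ∈ bOne k g₁ g₂) ∧
    -- `b₂` is a Lie subalgebra of `d`
    (∀ P Q, P ∈ bTwo k g₁ g₂ → Q ∈ bTwo k g₁ g₂ →
      dBracket act back P Q ∈ bTwo k g₁ g₂) ∧
    -- in `b₁`, the subspace `g₁*` is an abelian ideal
    (∀ α β : Module.Dual k (g₁ × g₂),
      (∀ f : g₂, α (0, f) = 0) → (∀ f : g₂, β (0, f) = 0) →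
      dBracket act back ((0 : g₁ × g₂), α) ((0 : g₁ × g₂), β) = 0) ∧
    (∀ P (α : Module.Dual k (g₁ × g₂)), P ∈ bOne k g₁ g₂ →
      (∀ f : g₂, α (0, f) = 0) →
      (dBracket act back P ((0 : g₁ × g₂), α)).1 = 0 ∧
      ∀ f : g₂, (dBracket act back P ((0 : g₁ × g₂), α)).2 (0, f) = 0) ∧
    -- in `b₂`, the subspace `g₂*` is an abelian ideal
    (∀ α β : Module.Dual k (g₁ × g₂),
      (∀ x : g₁, α (x, 0) = 0) → (∀ x : g₁, β (x, 0) = 0) →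
      dBracket act back ((0 : g₁ × g₂), α) ((0 : g₁ × g₂), β) = 0) ∧
    (∀ P (α : Module.Dual k (g₁ × g₂)), P ∈ bTwo k g₁ g₂ →
      (∀ x : g₁, α (x, 0) = 0) →
      (dBracket act back P ((0 : g₁ × g₂), α)).1 = 0 ∧
      ∀ x : g₁, (dBracket act back P ((0 : g₁ × g₂), α)).2 (x, 0) = 0) ∧
    -- `d = b₁ ⊕ b₂` as vector spaces
    (∀ P : (g₁ × g₂) × Module.Dual k (g₁ × g₂),
      ∃ Q R, Q ∈ bOne k g₁ g₂ ∧ R ∈ bTwo k g₁ g₂ ∧ P = Q + R) ∧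
    (∀ Q R, Q ∈ bOne k g₁ g₂ → R ∈ bTwo k g₁ g₂ → Q + R = 0 →
      Q = 0 ∧ R = 0) :=
  semidualization_skeletal_slicing_general act back

end
end

section
/- Let k be a field, V a k-vector space equipped with a symmetric bilinear form η, and let so(η) = {Λ ∈ End(V) : η(Λx, y) + η(x, Λy) = 0 for all x, y}, a Lie subalgebra of End(V) with the commutator bracket. Fix v ∈ V and an invertible κ ∈ k, and give V the Lie bracket [x, y] = κ⁻¹(η(v,x)y − η(v,y)x) (the Lie algebra an). For a, b ∈ V define J(a,b) ∈ End(V) by J(a,b)(y) = η(a,y)b − η(b,y)a; then J(a,b) ∈ so(η). Define Λ▷x := Λ(x) and Λ◁x := −κ⁻¹ J(Λ(v), x) for Λ ∈ so(η), x ∈ V. Then these maps satisfy the matched pair conditions: (i) [Λ,Λ']▷x = Λ▷(Λ'▷x) − Λ'▷(Λ▷x); (ii) Λ◁[x,x'] = (Λ◁x)◁x' − (Λ◁x')◁x; (iii) Λ▷[x,x'] = [Λ▷x, x'] + [x, Λ▷x'] + (Λ◁x)▷x' − (Λ◁x')▷x; (iv) [Λ,Λ']◁x = [Λ◁x, Λ']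 + [Λ, Λ'◁x] + Λ◁(Λ'▷x) − Λ'◁(Λ▷x). Hence (so(η), an) is a matched pair of Lie algebras. -/
section

variable {k V : Type*} [Field k] [AddCommGroup V] [Module k V]

/-- `so(η)`: endomorphisms antisymmetric with respect to the bilinear form
`η`. -/
def soSet (η : V →ₗ[k] V →ₗ[k] k) : Set (Module.End k V) :=
  {Λ | ∀ x y : V, η (Λ x) y + η x (Λ y) = 0}

/-- The `an`-type Lie bracket `[x,y] = κ⁻¹(η(v,x)·y − η(v,y)·x)` on `V`. -/
def anBr (η : V →ₗ[k] V →ₗ[k] k) (v : V) (κ : kˣ) (x y : V) : V :=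
  ((κ⁻¹ : kˣ) : k) • (η v x • y - η v y • x)

/-- `J(a,b) ∈ End(V)`, `J(a,b)(y) = η(a,y)·b − η(b,y)·a`. -/
def Jmap (η : V →ₗ[k] V →ₗ[k] k) (a b : V) : Module.End k V where
  toFun y := η a y • b - η b y • a
  map_add' y z := by
    simp only [map_add, add_smul]; abel
  map_smul' c y := by
    simp only [map_smul, smul_sub, smul_smul, RingHom.id_apply,
      smul_eq_mul]

/-- The back-action `Λ◁x = −κ⁻¹ J(Λ(v), x)` of `an` on `so(η)`. -/
def soBack (η : V →ₗ[k] V →ₗ[k] k) (v : V) (κ : kˣ)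
    (Λ : Module.End k V) (x : V) : Module.End k V :=
  -(((κ⁻¹ : kˣ) : k) • Jmap η (Λ v) x)

/-- `(so(η), an)` is a matched pair of Lie algebras: with the action
`Λ▷x = Λ(x)` and back-action `Λ◁x = −κ⁻¹ J(Λ(v), x)`, the four matched-pair
compatibility conditions hold, `J(a,b) ∈ so(η)`, the back-action lands in
`so(η)`, and `so(η)` is closed under the commutator bracket of `End(V)`. -/
theorem so_an_matched_pair
    (η : V →ₗ[k] V →ₗ[k] k) (hsymm : ∀ x y : V, η x y = η y x)
    (v : V) (κ : kˣ) :
    -- `J(a,b) ∈ so(η)`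
    (∀ a b : V, Jmap η a b ∈ soSet η) ∧
    -- `so(η)` is a Lie subalgebra of `End(V)` with the commutator bracket
    (∀ Λ ∈ soSet η, ∀ Λ' ∈ soSet η, ⁅Λ, Λ'⁆ ∈ soSet η) ∧
    -- the back-action lands in `so(η)`
    (∀ Λ ∈ soSet η, ∀ x : V, soBack η v κ Λ x ∈ soSet η) ∧
    -- (i)  [Λ,Λ']▷x = Λ▷(Λ'▷x) − Λ'▷(Λ▷x)
    (∀ Λ ∈ soSet η, ∀ Λ' ∈ soSet η, ∀ x : V,
      ⁅Λ, Λ'⁆ x = Λ (Λ' x) - Λ' (Λ x)) ∧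
    -- (ii) Λ◁[x,x'] = (Λ◁x)◁x' − (Λ◁x')◁x
    (∀ Λ ∈ soSet η, ∀ x x' : V,
      soBack η v κ Λ (anBr η v κ x x') =
        soBack η v κ (soBack η v κ Λ x) x'
          - soBack η v κ (soBack η v κ Λ x') x) ∧
    -- (iii) Λ▷[x,x'] = [Λ▷x, x'] + [x, Λ▷x'] + (Λ◁x)▷x' − (Λ◁x')▷x
    (∀ Λ ∈ soSet η, ∀ x x' : V,
      Λ (anBr η v κ x x') =
        anBr η v κ (Λ x) x' + anBr η v κ x (Λ x')
          + (soBack η v κ Λ x) x' - (soBack η v κ Λ x') x) ∧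
    -- (iv) [Λ,Λ']◁x = [Λ◁x, Λ'] + [Λ, Λ'◁x] + Λ◁(Λ'▷x) − Λ'◁(Λ▷x)
    (∀ Λ ∈ soSet η, ∀ Λ' ∈ soSet η, ∀ x : V,
      soBack η v κ ⁅Λ, Λ'⁆ x =
        ⁅soBack η v κ Λ x, Λ'⁆ + ⁅Λ, soBack η v κ Λ' x⁆
          + soBack η v κ Λ (Λ' x) - soBack η v κ Λ' (Λ x)) := by
  have hJ : ∀ a b : V, Jmap η a b ∈ soSet η := by
    intro a b x y
    simp only [Jmap, LinearMap.coe_mk, AddHom.coe_mk, map_sub, map_smul,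
      LinearMap.sub_apply, LinearMap.smul_apply, smul_eq_mul,
      LinearMap.map_sub₂, LinearMap.map_smul₂]
    rw [hsymm x a, hsymm x b]; ring
  refine ⟨hJ, ?_, ?_, ?_, ?_, ?_, ?_⟩
  · -- closure under bracket
    intro Λ hΛ Λ' hΛ' x y
    have h : ∀ a b, η (Λ a) b = - η a (Λ b) := fun a b =>
      eq_neg_of_add_eq_zero_left (hΛ a b)
    have h' : ∀ a b, η (Λ' a) b = - η a (Λ' b) := fun a b =>
      eq_neg_of_add_eq_zero_left (hΛ' a b)
    simp only [Ring.lie_def, LinearMap.sub_apply, Module.End.mul_apply,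
       map_sub, LinearMap.map_sub₂, h, h', map_neg,
      LinearMap.map_neg₂, neg_neg]
    ring
  · -- back-action lands in so(η)
    intro Λ hΛ x a b
    have := hJ (Λ v) x a b
    simp only [soBack, LinearMap.neg_apply, LinearMap.smul_apply, map_neg,
      map_smul, smul_eq_mul, Units.val_inv_eq_inv_val, LinearMap.map_neg₂, LinearMap.map_smul₂]
    linear_combination (-((κ:k)⁻¹)) * this
  · -- (i)
    intro Λ _ Λ' _ x
    simp only [Ring.lie_def, LinearMap.sub_apply, Module.End.mul_apply]
  · -- (ii)
    intro Λ hΛ x x'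
    have h : ∀ a b, η (Λ a) b = - η a (Λ b) := fun a b =>
      eq_neg_of_add_eq_zero_left (hΛ a b)
    have hc : η v (Λ v) = - η v (Λ v) := by
      rw [← h v v]; exact hsymm _ _
    ext y
    simp only [soBack, anBr, Jmap, LinearMap.neg_apply, LinearMap.smul_apply,
      LinearMap.sub_apply, LinearMap.coe_mk, AddHom.coe_mk, map_sub, map_smul,
      smul_eq_mul, smul_sub, smul_smul, h, hsymm x v, hsymm x' v, hsymm x x', neg_neg,
      mul_neg, neg_mul, neg_sub, sub_smul, neg_smul, map_neg,
      LinearMap.map_smul₂, LinearMap.map_sub₂]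
    match_scalars
    all_goals first
      | ring1
      | linear_combination ((1:k)*((κ:k)⁻¹*(κ:k)⁻¹) * (η x y)) * hc
      | linear_combination ((1:k)*((κ:k)⁻¹*(κ:k)⁻¹) * (η x' y)) * hc
      | linear_combination ((-1:k)*((κ:k)⁻¹*(κ:k)⁻¹) * (η x y)) * hc
      | linear_combination ((-1:k)*((κ:k)⁻¹*(κ:k)⁻¹) * (η x' y)) * hc
  · -- (iii)
    intro Λ hΛ x x'
    have h : ∀ a b, η (Λ a) b = - η a (Λ b) := fun a b =>
      eq_neg_of_add_eq_zero_left (hΛ a b)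
    simp only [soBack, anBr, Jmap, LinearMap.neg_apply, LinearMap.smul_apply,
      LinearMap.sub_apply, LinearMap.coe_mk, AddHom.coe_mk, map_sub, map_smul,
      smul_eq_mul, smul_sub, smul_smul, h, hsymm x v, hsymm x' v, hsymm x x', neg_neg,
      mul_neg, neg_mul, neg_sub, sub_smul, neg_smul, map_neg,
      LinearMap.map_smul₂, LinearMap.map_sub₂]
    match_scalars <;> ring1
  · -- (iv)
    intro Λ hΛ Λ' hΛ' x
    have h : ∀ a b, η (Λ a) b = - η a (Λ b) := fun a b =>
      eq_neg_of_add_eq_zero_left (hΛ a b)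
    have h' : ∀ a b, η (Λ' a) b = - η a (Λ' b) := fun a b =>
      eq_neg_of_add_eq_zero_left (hΛ' a b)
    have hc : η v (Λ v) = - η v (Λ v) := by
      rw [← h v v]; exact hsymm _ _
    have hc' : η v (Λ' v) = - η v (Λ' v) := by
      rw [← h' v v]; exact hsymm _ _
    have hd : η v (Λ (Λ' v)) = η v (Λ' (Λ v)) := by
      rw [hsymm v (Λ (Λ' v)), h, h', neg_neg]
    ext y
    simp only [soBack, anBr, Jmap, Ring.lie_def, LinearMap.neg_apply,
      LinearMap.smul_apply, LinearMap.sub_apply, LinearMap.add_apply,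
      Module.End.mul_apply, LinearMap.coe_mk,
      AddHom.coe_mk, map_sub, map_add, map_smul, smul_eq_mul, smul_sub,
      smul_smul, h, h', hsymm x v, neg_neg, mul_neg, neg_mul, neg_sub,
      sub_smul, neg_smul, map_neg, LinearMap.map_smul₂, LinearMap.map_sub₂,
      LinearMap.map_neg₂, LinearMap.map_add₂]
    match_scalars
    all_goals first
      | ring1
      | linear_combination ((1:k)*((κ:k)⁻¹) * (η x y)) * hd
      | linear_combination ((-1:k)*((κ:k)⁻¹) * (η x y)) * hd
      | linear_combination ((1:k)*((κ:k)⁻¹) * (η x y)) * hc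
      | linear_combination ((-1:k)*((κ:k)⁻¹) * (η x y)) * hc
      | linear_combination ((1:k)*((κ:k)⁻¹) * (η x y)) * hc'
      | linear_combination ((-1:k)*((κ:k)⁻¹) * (η x y)) * hc'


end
end

section
/- Let D be a group and let λ₁, β̄₁, ȳ₁, u₁, ũ₁, ỹ₁, β̃₁, λ̃₁, λ₂, β̄₂, ȳ₂, u₂, ũ₂, ỹ₂, β̃₂, λ̃₂, β', y', ỹ', β̃' be elements of D satisfying: the ribbon constraints (λ₁β̄₁)(ȳ₁u₁) = (ũ₁ỹ₁)(β̃₁λ̃₁) and (λ₂β̄₂)(ȳ₂u₂) = (ũ₂ỹ₂)(β̃₂λ̃₂); the wedge-gluing constraint λ̃₁ = λ₂; the conjugation relations u₁β̄₂u₁⁻¹ = β'y' and ũ₂⁻¹β̃₁ũ₂ = ỹ'β̃'; and the commutation relations ȳ₁β' = β'ȳ₁ and ỹ₂β̃' = β̃'ỹ₂. Then the extended ribbon equation holds: λ₁(β̄₁β')(ȳ₁ y' (u₁ȳ₂u₁⁻¹))(u₁u₂) = (ũ₁ũ₂)((ũ₂⁻¹ỹ₁ũ₂) ỹ' ỹ₂)(β̃'β̃₂)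 λ̃₂. -/
/-- Extended ribbon equation for the gluing of two wedges sharing the same
edge. Here `lam = λ` (edge in `G₂`), `bb = β̄`, `bt = β̃` (faces in `G₁*`),
`yb = ȳ`, `yt = ỹ` (wedges in `G₂*`), `u = u`, `ut = ũ` (links in `G₁`),
`lamt = λ̃`. -/
theorem extended_ribbon_wedge_gluing
    {D : Type*} [Group D]
    (lam₁ bb₁ yb₁ u₁ ut₁ yt₁ bt₁ lamt₁
     lam₂ bb₂ yb₂ u₂ ut₂ yt₂ bt₂ lamt₂
     b' y' yt' bt' : D)
    -- the two ribbon constraints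
    (rib₁ : (lam₁ * bb₁) * (yb₁ * u₁) = (ut₁ * yt₁) * (bt₁ * lamt₁))
    (rib₂ : (lam₂ * bb₂) * (yb₂ * u₂) = (ut₂ * yt₂) * (bt₂ * lamt₂))
    -- the wedge-gluing constraint
    (glue : lamt₁ = lam₂)
    -- the conjugation relations
    (conj₁ : u₁ * bb₂ * u₁⁻¹ = b' * y')
    (conj₂ : ut₂⁻¹ * bt₁ * ut₂ = yt' * bt')
    -- the commutation relations
    (comm₁ : yb₁ * b' = b' * yb₁)
    (comm₂ : yt₂ * bt' = bt' * yt₂) :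
    lam₁ * (bb₁ * b') * (yb₁ * y' * (u₁ * yb₂ * u₁⁻¹)) * (u₁ * u₂) =
      (ut₁ * ut₂) * ((ut₂⁻¹ * yt₁ * ut₂) * yt' * yt₂) * (bt' * bt₂) * lamt₂ := by
  have key₁ : u₁ * bb₂ = b' * y' * u₁ := by
    rw [← conj₁]; group
  have key₂ : bt₁ * ut₂ = ut₂ * (yt' * bt') := by
    rw [← conj₂]; group
  calc lam₁ * (bb₁ * b') * (yb₁ * y' * (u₁ * yb₂ * u₁⁻¹)) * (u₁ * u₂)
      = lam₁ * bb₁ * (b' * yb₁) * (y' * u₁) * yb₂ * u₂ := by group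
    _ = lam₁ * bb₁ * (yb₁ * b') * (y' * u₁) * yb₂ * u₂ := by rw [comm₁]
    _ = lam₁ * bb₁ * yb₁ * (b' * y' * u₁) * yb₂ * u₂ := by group
    _ = lam₁ * bb₁ * yb₁ * (u₁ * bb₂) * yb₂ * u₂ := by rw [key₁]
    _ = (lam₁ * bb₁) * (yb₁ * u₁) * (bb₂ * yb₂ * u₂) := by group
    _ = (ut₁ * yt₁) * (bt₁ * lamt₁) * (bb₂ * yb₂ * u₂) := by rw [rib₁]
    _ = ut₁ * yt₁ * bt₁ * ((lam₂ * bb₂) * (yb₂ * u₂)) := by rw [glue]; group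
    _ = ut₁ * yt₁ * bt₁ * ((ut₂ * yt₂) * (bt₂ * lamt₂)) := by rw [rib₂]
    _ = ut₁ * yt₁ * (bt₁ * ut₂) * yt₂ * bt₂ * lamt₂ := by group
    _ = ut₁ * yt₁ * (ut₂ * (yt' * bt')) * yt₂ * bt₂ * lamt₂ := by rw [key₂]
    _ = ut₁ * yt₁ * ut₂ * yt' * (bt' * yt₂) * bt₂ * lamt₂ := by group
    _ = ut₁ * yt₁ * ut₂ * yt' * (yt₂ * bt') * bt₂ * lamt₂ := by rw [comm₂]
    _ = (ut₁ * ut₂) * ((ut₂⁻¹ * yt₁ * ut₂) * yt' * yt₂) * (bt' * bt₂) * lamt₂ := by group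
end

section
/- Let D be a group and let ũ₁, ỹ₁, β̃₁, λ̃₁, ỹ₂, β̃₂, λ̃₂, λ₁, β̄₁, ȳ₁, λ₂, β̄₂, ȳ₂, u₂, ỹ', β̃', β', y' be elements of D satisfying: the glued ribbon relation (ũ₁ỹ₁)(β̃₁λ̃₁) ỹ₂ (β̃₂λ̃₂) = (λ₁β̄₁) ȳ₁ (λ₂β̄₂)(ȳ₂u₂); the conjugation relations λ̃₁ỹ₂λ̃₁⁻¹ = ỹ'β̃' and λ₂⁻¹ȳ₁λ₂ = β'y'; and the commutation relations β̃₁ỹ' = ỹ'β̃₁ and β̄₂y' = y'β̄₂. Then the extended ribbon equation holds: ũ₁ (ỹ₁ỹ')(β̃₁ β̃' (λ̃₁β̃₂λ̃₁⁻¹))(λ̃₁λ̃₂) = (λ₁λ₂)((λ₂⁻¹β̄₁λ₂) β' β̄₂)(y'ȳ₂) u₂. -/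
/-- Extended ribbon equation for face gluing. Here `lam = λ`, `lamt = λ̃`
(edges in `G₂`), `bb = β̄`, `bt = β̃` (faces in `G₁*`), `yb = ȳ`, `yt = ỹ`
(wedges in `G₂*`), `ut = ũ`, `u = u` (links in `G₁`). The glued ribbon
relation arises from the two ribbon constraints together with the
face-gluing constraint `u₁ = ũ₂`. -/
theorem extended_ribbon_face_gluing
    {D : Type*} [Group D]
    (ut₁ yt₁ bt₁ lamt₁ yt₂ bt₂ lamt₂
     lam₁ bb₁ yb₁ lam₂ bb₂ yb₂ u₂
     yt' bt' b' y' : D)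
    -- the glued ribbon relation
    (glued : (ut₁ * yt₁) * (bt₁ * lamt₁) * yt₂ * (bt₂ * lamt₂) =
      (lam₁ * bb₁) * yb₁ * (lam₂ * bb₂) * (yb₂ * u₂))
    -- the conjugation relations
    (conj₁ : lamt₁ * yt₂ * lamt₁⁻¹ = yt' * bt')
    (conj₂ : lam₂⁻¹ * yb₁ * lam₂ = b' * y')
    -- the commutation relations
    (comm₁ : bt₁ * yt' = yt' * bt₁)
    (comm₂ : bb₂ * y' = y' * bb₂) :
    ut₁ * (yt₁ * yt') * (bt₁ * bt' * (lamt₁ * bt₂ * lamt₁⁻¹)) * (lamt₁ * lamt₂) =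
      (lam₁ * lam₂) * ((lam₂⁻¹ * bb₁ * lam₂) * b' * bb₂) * (y' * yb₂) * u₂ := by
  have e1 : yt' * bt₁ * bt' = bt₁ * (lamt₁ * yt₂ * lamt₁⁻¹) := by
    rw [← comm₁, mul_assoc, conj₁]
  have e2 : lam₂ * b' * y' = yb₁ * lam₂ := by
    rw [mul_assoc, ← conj₂]; group
  have g := glued
  simp only [mul_assoc] at g ⊢
  simp only [inv_mul_cancel_left, mul_inv_cancel_left]
  -- goal: ut₁ * (yt₁ * (yt' * (bt₁ * (bt' * (lamt₁ * (bt₂ * lamt₂)))))) = ...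
  have e1' : ∀ z : D, yt' * (bt₁ * (bt' * z)) = bt₁ * (lamt₁ * (yt₂ * (lamt₁⁻¹ * z))) := by
    intro z; have := congrArg (· * z) e1; simpa [mul_assoc] using this
  have e2' : ∀ z : D, lam₂ * (b' * (bb₂ * (y' * z))) = yb₁ * (lam₂ * (bb₂ * z)) := by
    intro z
    have h : lam₂ * (b' * (y' * (bb₂ * z))) = yb₁ * (lam₂ * (bb₂ * z)) := by
      have := congrArg (· * (bb₂ * z)) e2; simpa [mul_assoc] using this
    rw [← h]
    simp only [← mul_assoc]
    rw [mul_assoc (lam₂*b') bb₂ y', comm₂]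
    simp [mul_assoc]
  rw [e1', e2']
  simpa [mul_assoc] using g
end

section
/- Let D be a group and let ȳ₁, u₁, β̄₁, ũ₂, ỹ₂, β̃₂, λ̃₂, β̃₁, λ̃₁, ũ₁, ỹ₁, β₂, ȳ₂, u₂, y', β', y'', β'' be elements of D satisfying: the glued ribbon relation (ȳ₁u₁)⁻¹ β̄₁⁻¹ (ũ₂ỹ₂)(β̃₂λ̃₂) = (β̃₁λ̃₁)⁻¹ (ũ₁ỹ₁)⁻¹ β₂ (ȳ₂u₂); the conjugation relations ũ₂⁻¹β̄₁ũ₂ = (y'β')⁻¹ and ũ₁⁻¹β₂ũ₁ = y''β''; and the commutation relations β'ỹ₂ = ỹ₂β', β''ỹ₁ = ỹ₁β'' and β''y'' = y''β''. Then the extended ribbon equation holds: (u₁⁻¹ũ₂)((ũ₂⁻¹ȳ₁⁻¹ũ₂) y' ỹ₂)(β'β̃₂) λ̃₂ = λ̃₁⁻¹ (β̃₁⁻¹β'')(ỹ₁⁻¹ y'' (ũ₁⁻¹ȳ₂ũ₁))(ũ₁⁻¹u₂). -/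
/-- Extended ribbon equation for the wedge gluing of two atomic phase spaces
along identified (oppositely oriented) edges. Here `lamt = λ̃` (edges in
`G₂`), `bb = β̄`, `b = β`, `bt = β̃` (faces in `G₁*`), `yb = ȳ`, `yt = ỹ`
(wedges in `G₂*`), `u = u`, `ut = ũ` (links in `G₁`). The glued ribbon
relation arises from the two ribbon constraints together with the
edge-identification constraint `λ₁ = λ₂⁻¹`. -/
theorem extended_ribbon_edge_identified_wedge_gluing
    {D : Type*} [Group D]
    (yb₁ u₁ bb₁ ut₂ yt₂ bt₂ lamt₂ bt₁ lamt₁ ut₁ yt₁ b₂ yb₂ u₂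
     y' b' y'' b'' : D)
    -- the glued ribbon relation
    (glued : (yb₁ * u₁)⁻¹ * bb₁⁻¹ * (ut₂ * yt₂) * (bt₂ * lamt₂) =
      (bt₁ * lamt₁)⁻¹ * (ut₁ * yt₁)⁻¹ * b₂ * (yb₂ * u₂))
    -- the conjugation relations
    (conj₁ : ut₂⁻¹ * bb₁ * ut₂ = (y' * b')⁻¹)
    (conj₂ : ut₁⁻¹ * b₂ * ut₁ = y'' * b'')
    -- the commutation relations
    (comm₁ : b' * yt₂ = yt₂ * b')
    (comm₂ : b'' * yt₁ = yt₁ * b'')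
    (comm₃ : b'' * y'' = y'' * b'') :
    (u₁⁻¹ * ut₂) * ((ut₂⁻¹ * yb₁⁻¹ * ut₂) * y' * yt₂) * (b' * bt₂) * lamt₂ =
      lamt₁⁻¹ * (bt₁⁻¹ * b'') * (yt₁⁻¹ * y'' * (ut₁⁻¹ * yb₂ * ut₁)) *
        (ut₁⁻¹ * u₂) := by
  have h1 : ut₂ * (y' * b') = bb₁⁻¹ * ut₂ := by
    have : y' * b' = ut₂⁻¹ * bb₁⁻¹ * ut₂ := by
      rw [← inv_inv (y' * b'), ← conj₁]; group
    rw [this]; group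
  have h2 : y'' * b'' = ut₁⁻¹ * b₂ * ut₁ := conj₂.symm
  have hl : (u₁⁻¹ * ut₂) * ((ut₂⁻¹ * yb₁⁻¹ * ut₂) * y' * yt₂) * (b' * bt₂) * lamt₂ =
      (yb₁ * u₁)⁻¹ * bb₁⁻¹ * (ut₂ * yt₂) * (bt₂ * lamt₂) := by
    calc (u₁⁻¹ * ut₂) * ((ut₂⁻¹ * yb₁⁻¹ * ut₂) * y' * yt₂) * (b' * bt₂) * lamt₂
        = u₁⁻¹ * yb₁⁻¹ * (ut₂ * (y' * b')) * yt₂ * bt₂ * lamt₂ := by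
          have := comm₁
          calc (u₁⁻¹ * ut₂) * ((ut₂⁻¹ * yb₁⁻¹ * ut₂) * y' * yt₂) * (b' * bt₂) * lamt₂
              = u₁⁻¹ * yb₁⁻¹ * ut₂ * y' * (yt₂ * b') * bt₂ * lamt₂ := by group
            _ = u₁⁻¹ * yb₁⁻¹ * ut₂ * y' * (b' * yt₂) * bt₂ * lamt₂ := by rw [comm₁]
            _ = u₁⁻¹ * yb₁⁻¹ * (ut₂ * (y' * b')) * yt₂ * bt₂ * lamt₂ := by group
      _ = u₁⁻¹ * yb₁⁻¹ * (bb₁⁻¹ * ut₂) * yt₂ * bt₂ * lamt₂ := by rw [h1]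
      _ = (yb₁ * u₁)⁻¹ * bb₁⁻¹ * (ut₂ * yt₂) * (bt₂ * lamt₂) := by group
  have hr : lamt₁⁻¹ * (bt₁⁻¹ * b'') * (yt₁⁻¹ * y'' * (ut₁⁻¹ * yb₂ * ut₁)) *
        (ut₁⁻¹ * u₂) =
      (bt₁ * lamt₁)⁻¹ * (ut₁ * yt₁)⁻¹ * b₂ * (yb₂ * u₂) := by
    calc lamt₁⁻¹ * (bt₁⁻¹ * b'') * (yt₁⁻¹ * y'' * (ut₁⁻¹ * yb₂ * ut₁)) * (ut₁⁻¹ * u₂)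
        = lamt₁⁻¹ * bt₁⁻¹ * (b'' * yt₁⁻¹) * y'' * ut₁⁻¹ * yb₂ * u₂ := by group
      _ = lamt₁⁻¹ * bt₁⁻¹ * (yt₁⁻¹ * b'') * y'' * ut₁⁻¹ * yb₂ * u₂ := by
          have : b'' * yt₁⁻¹ = yt₁⁻¹ * b'' := by
            rw [mul_inv_eq_iff_eq_mul, mul_assoc, comm₂]; group
          rw [this]
      _ = lamt₁⁻¹ * bt₁⁻¹ * yt₁⁻¹ * (b'' * y'') * ut₁⁻¹ * yb₂ * u₂ := by group
      _ = lamt₁⁻¹ * bt₁⁻¹ * yt₁⁻¹ * (y'' * b'') * ut₁⁻¹ * yb₂ * u₂ := by rw [comm₃]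
      _ = lamt₁⁻¹ * bt₁⁻¹ * yt₁⁻¹ * (ut₁⁻¹ * b₂ * ut₁) * ut₁⁻¹ * yb₂ * u₂ := by rw [h2]
      _ = (bt₁ * lamt₁)⁻¹ * (ut₁ * yt₁)⁻¹ * b₂ * (yb₂ * u₂) := by group
  rw [hl, hr, glued]
end
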